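/- Weighted subject reduction for β-redexes: if π is a derivation of Γ ⊢_D (λx.M)N : α then there exists a derivation π' of Γ ⊢_D M{N/x} : α with #app(π') = #app(π) − 1. -/

import Mathlib

/-- Untyped λ⊥-terms in de Bruijn notation, intrinsically scoped:
`Tm n` is the set of λ⊥-terms with free variables among `x₀,…,x_{n-1}`. -/
inductive Tm : ℕ → Type
  | var : ∀ {n : ℕ}, Fin n → Tm n
  | lam : ∀ {n : ℕ}, Tm (n + 1) → Tm n
  | app : ∀ {n : ℕ}, Tm n → Tm n → Tm n
  | bot : ∀ {n : ℕ}, Tm n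

/-- Renaming of free variables. -/
def Tm.rename : ∀ {n m : ℕ}, (Fin n → Fin m) → Tm n → Tm m
  | _, _, f, .var k => .var (f k)
  | _, m, f, .lam t =>
      .lam (t.rename fun k => Fin.cases (motive := fun _ => Fin (m + 1)) 0
        (fun j => (f j).succ) k)
  | _, _, f, .app t u => .app (t.rename f) (u.rename f)
  | _, _, _, .bot => .bot

/-- Simultaneous (capture-avoiding) substitution. -/
def Tm.subst : ∀ {n m : ℕ}, (Fin n → Tm m) → Tm n → Tm m
  | _, _, σ, .var k => σ k
  | _, m, σ, .lam t =>
      .lam (t.subst fun k => Fin.cases (motive := fun _ => Tm (m + 1)) (.var 0)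
        (fun j => (σ j).rename Fin.succ) k)
  | _, _, σ, .app t u => .app (t.subst σ) (u.subst σ)
  | _, _, _, .bot => .bot

/-- Substitution `M{N/y}` of `N` for the 0-th free variable of `M`. -/
def Tm.subst1 {n : ℕ} (M : Tm (n + 1)) (N : Tm n) : Tm n :=
  M.subst (Fin.cases (motive := fun _ => Tm n) N Tm.var)

/-- One-step β-reduction (contextual closure of `(λx.M)N → M{N/x}`). -/
inductive Beta : ∀ {n : ℕ}, Tm n → Tm n → Prop
  | redex {n} (M : Tm (n + 1)) (N : Tm n) : Beta (.app (.lam M) N) (M.subst1 N)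
  | appL {n} {M M' N : Tm n} : Beta M M' → Beta (.app M N) (.app M' N)
  | appR {n} {M N N' : Tm n} : Beta N N' → Beta (.app M N) (.app M N')
  | lam {n} {M M' : Tm (n + 1)} : Beta M M' → Beta (.lam M) (.lam M')

/-- A λ⊥-term is a λ-term when it contains no occurrence of `⊥`. -/
def BotFree : ∀ {n : ℕ}, Tm n → Prop
  | _, .var _ => True
  | _, .lam M => BotFree M
  | _, .app M N => BotFree M ∧ BotFree N
  | _, .bot => False

/-- The environment assigning the multiset `[α]` to the variable `k` and `0` elsewhere. -/
def single {D : Type} {n : ℕ} (k : Fin n) (α : D) : Fin n → Multiset D :=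
  fun j => if j = k then {α} else 0

/-- The relational interpretation `⟦M⟧_{x̄} ⊆ M_f(D)ⁿ × D` of a λ⊥-term in a relational
graph model `(D, i)`. -/
def Interp {D : Type} (i : Multiset D × D → D) :
    ∀ {n : ℕ}, Tm n → Set ((Fin n → Multiset D) × D)
  | _, .var k => {p | ∃ α, p = (single k α, α)}
  | _, .lam M => {p | ∃ Γ a α, (Fin.cons a Γ, α) ∈ Interp i M ∧ p = (Γ, i (a, α))}
  | n, .app M N =>
      {p | ∃ (Γ₀ : Fin n → Multiset D) (l : List ((Fin n → Multiset D) × D)),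
        (Γ₀, i (↑(l.map Prod.snd), p.2)) ∈ Interp i M ∧
        (∀ q ∈ l, q ∈ Interp i N) ∧ p.1 = Γ₀ + (l.map Prod.fst).sum}
  | _, .bot => ∅

/-- The non-idempotent intersection type system associated with a relational graph model
`(D, i)`: `Der i Γ M α m` states that the judgment `Γ ⊢ M : α` is derivable by a
derivation `π` with `#app(π) = m` occurrences of the application rule. -/
inductive Der {D : Type} (i : Multiset D × D → D) :
    ∀ {n : ℕ}, (Fin n → Multiset D) → Tm n → D → ℕ → Prop
  | var {n} (k : Fin n) (α : D) : Der i (single k α) (.var k) α 0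
  | lam {n} {Γ : Fin n → Multiset D} {a : Multiset D} {M : Tm (n + 1)} {α : D} {m : ℕ} :
      Der i (Fin.cons a Γ) M α m → Der i Γ (.lam M) (i (a, α)) m
  | app {n} {Γ : Fin n → Multiset D} {M N : Tm n} {α : D} {m : ℕ}
      (l : List ((Fin n → Multiset D) × D × ℕ)) :
      Der i Γ M (i (↑(l.map fun q => q.2.1), α)) m →
      (∀ q ∈ l, Der i q.1 N q.2.1 q.2.2) →
      Der i (Γ + (l.map fun q => q.1).sum) (.app M N) α
        (m + (l.map fun q => q.2.2).sum + 1)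

/-!
The redex `(λx.M)N` is typed by a derivation of `Γ₀, x : a ⊢ M : α` together with derivations
of `N` for the elements of `a`, joined by one application rule. The weighted substitution lemma
replaces each axiom for `x` in the derivation of `M` by one of the derivations of `N`; the result
types `M{N/x}` and contains exactly the application rules of the two parts. It is proved for
simultaneous substitutions, each variable `j` being replaced by a term typed by the multiset
`Γ j`, so that the induction on derivations passes under binders without any reindexing.
-/

-- For `R = (Der i · N · ·)` these are the premises `Δₖ ⊢ N : βₖ` of rule (app), summed up.
inductive Bag {C T : Type*} [AddCommMonoid C] (R : C → T → ℕ → Prop) :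
    C → Multiset T → ℕ → Prop
  | zero : Bag R 0 0 0
  | cons {c c' : C} {t : T} {a : Multiset T} {w w' : ℕ} :
      R c t w → Bag R c' a w' → Bag R (c + c') (t ::ₘ a) (w + w')

namespace Bag

variable {C C' T : Type*} [AddCommMonoid C] [AddCommMonoid C'] {R : C → T → ℕ → Prop}

theorem of_list (l : List (C × T × ℕ)) (hl : ∀ q ∈ l, R q.1 q.2.1 q.2.2) :
    Bag R (l.map fun q => q.1).sum ↑(l.map fun q => q.2.1) (l.map fun q => q.2.2).sum := by
  induction l with
  | nil => exact zero
  | cons q l ih =>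
    simpa using cons (hl q List.mem_cons_self) (ih fun q hq => hl q (List.mem_cons_of_mem _ hq))

theorem exists_list {c : C} {a : Multiset T} {w : ℕ} (h : Bag R c a w) :
    ∃ l : List (C × T × ℕ), (∀ q ∈ l, R q.1 q.2.1 q.2.2) ∧ c = (l.map fun q => q.1).sum ∧
      a = ↑(l.map fun q => q.2.1) ∧ w = (l.map fun q => q.2.2).sum := by
  induction h with
  | zero => exact ⟨[], by simp⟩
  | @cons c _ t _ w _ hR _ ih =>
    obtain ⟨l, hl, rfl, rfl, rfl⟩ := ih
    refine ⟨(c, t, w) :: l, ?_, by simp⟩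
    rintro q (_ | ⟨_, hq⟩)
    exacts [hR, hl q hq]

theorem map {R' : C' → T → ℕ → Prop} (g : C →+ C') (hg : ∀ c t w, R c t w → R' (g c) t w)
    {c : C} {a : Multiset T} {w : ℕ} (h : Bag R c a w) : Bag R' (g c) a w := by
  induction h with
  | zero => simpa using zero
  | cons hR _ ih => simpa using cons (hg _ _ _ hR) ih

theorem eq_zero {c : C} {w : ℕ} (h : Bag R c 0 w) : c = 0 ∧ w = 0 := by
  generalize ha : (0 : Multiset T) = a at h
  cases h with
  | zero => exact ⟨rfl, rfl⟩
  | cons => exact absurd ha.symm (Multiset.cons_ne_zero)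

theorem of_singleton {c : C} {t : T} {w : ℕ} (h : Bag R c {t} w) : R c t w := by
  generalize ha : ({t} : Multiset T) = a at h
  cases h with
  | zero => exact absurd ha (Multiset.singleton_ne_zero t)
  | cons hR hrest =>
    obtain ⟨rfl, rfl⟩ := (Multiset.singleton_eq_cons_iff _).mp ha
    obtain ⟨rfl, rfl⟩ := hrest.eq_zero
    simpa using hR

theorem exists_split {c : C} {a b : Multiset T} {w : ℕ} (h : Bag R c (a + b) w) :
    ∃ c₁ c₂ w₁ w₂, Bag R c₁ a w₁ ∧ Bag R c₂ b w₂ ∧ c = c₁ + c₂ ∧ w = w₁ + w₂ := by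
  generalize hab : a + b = s at h
  induction h generalizing a b with
  | zero =>
    obtain ⟨rfl, rfl⟩ := add_eq_zero.mp hab
    exact ⟨0, 0, 0, 0, zero, zero, by simp, rfl⟩
  | @cons c c' t s w w' hR _ ih =>
    have ht : t ∈ a + b := hab ▸ Multiset.mem_cons_self t s
    rcases Multiset.mem_add.mp ht with ht | ht
    · obtain ⟨a, rfl⟩ := Multiset.exists_cons_of_mem ht
      obtain ⟨c₁, c₂, w₁, w₂, h₁, h₂, rfl, rfl⟩ :=
        ih (a := a) (b := b) ((Multiset.cons_inj_right t).mp (by rw [← hab, Multiset.cons_add]))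
      exact ⟨c + c₁, c₂, w + w₁, w₂, cons hR h₁, h₂, (add_assoc _ _ _).symm,
        (add_assoc _ _ _).symm⟩
    · obtain ⟨b, rfl⟩ := Multiset.exists_cons_of_mem ht
      obtain ⟨c₁, c₂, w₁, w₂, h₁, h₂, rfl, rfl⟩ :=
        ih (a := a) (b := b) ((Multiset.cons_inj_right t).mp (by rw [← hab, Multiset.add_cons]))
      exact ⟨c₁, c + c₂, w₁, w + w₂, h₁, cons hR h₂, add_left_comm _ _ _, add_left_comm _ _ _⟩

theorem exists_split_family {ι : Type*} [Fintype ι] {R : ι → C → T → ℕ → Prop}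
    {Θ : ι → C} {a b : ι → Multiset T} {v : ι → ℕ}
    (h : ∀ j, Bag (R j) (Θ j) (a j + b j) (v j)) :
    ∃ (Θ₁ Θ₂ : ι → C) (v₁ v₂ : ι → ℕ), (∀ j, Bag (R j) (Θ₁ j) (a j) (v₁ j)) ∧
      (∀ j, Bag (R j) (Θ₂ j) (b j) (v₂ j)) ∧
      ∑ j, Θ j = ∑ j, Θ₁ j + ∑ j, Θ₂ j ∧ ∑ j, v j = ∑ j, v₁ j + ∑ j, v₂ j := by
  choose Θ₁ Θ₂ v₁ v₂ h₁ h₂ hΘ hv using fun j => (h j).exists_split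
  exact ⟨Θ₁, Θ₂, v₁, v₂, h₁, h₂, by simp [hΘ, Finset.sum_add_distrib],
    by simp [hv, Finset.sum_add_distrib]⟩

end Bag

-- Renaming along `f` adds up the multisets of the variables that `f` identifies.
def fiberSum {ι κ M : Type*} [Fintype ι] [DecidableEq κ] [AddCommMonoid M] (f : ι → κ) :
    (ι → M) →+ (κ → M) :=
  ∑ k, (AddMonoidHom.single _ (f k)).comp (Pi.evalAddMonoidHom _ k)

section fiberSum

variable {ι κ M : Type*} [Fintype ι] [DecidableEq κ] [AddCommMonoid M]

theorem fiberSum_apply (f : ι → κ) (Γ : ι → M) : fiberSum f Γ = ∑ k, Pi.single (f k) (Γ k) := by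
  simp [fiberSum]

theorem fiberSum_single [DecidableEq ι] (f : ι → κ) (k : ι) (a : M) :
    fiberSum f (Pi.single k a) = Pi.single (f k) a := by
  rw [fiberSum_apply, Finset.sum_eq_single k] <;> simp_all

theorem fiberSum_succ {n : ℕ} (Γ : Fin n → M) : fiberSum Fin.succ Γ = Fin.cons 0 Γ := by
  funext j
  cases j using Fin.cases <;> simp [fiberSum_apply, Finset.sum_apply, Pi.single_apply]

theorem fiberSum_cons {n m : ℕ} (f : Fin n → Fin m) (a : M) (Γ : Fin n → M) :
    fiberSum (fun k => Fin.cases (motive := fun _ => Fin (m + 1)) 0 (fun j => (f j).succ) k)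
      (Fin.cons a Γ) = Fin.cons a (fiberSum f Γ) := by
  funext j
  cases j using Fin.cases <;>
    simp [fiberSum_apply, Finset.sum_apply, Pi.single_apply, Fin.sum_univ_succ,
      (Fin.succ_ne_zero _).symm]

end fiberSum

section Der

variable {D : Type} {i : Multiset D × D → D}

theorem single_eq_pi_single {n : ℕ} (k : Fin n) (α : D) : single k α = Pi.single k {α} := by
  funext j
  simp [single, Pi.single_apply]

theorem Der.app_of_bag {n : ℕ} {Γ Δ : Fin n → Multiset D} {M N : Tm n} {a : Multiset D} {α : D}
    {m v : ℕ} (hM : Der i Γ M (i (a, α)) m) (hN : Bag (Der i · N · ·) Δ a v) :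
    Der i (Γ + Δ) (.app M N) α (m + v + 1) := by
  obtain ⟨l, hl, rfl, rfl, rfl⟩ := hN.exists_list
  exact Der.app l hM hl

theorem Der.exists_of_app {n : ℕ} {Γ : Fin n → Multiset D} {M N : Tm n} {α : D} {m : ℕ}
    (h : Der i Γ (.app M N) α m) :
    ∃ Γ₀ Δ a m₀ v, Der i Γ₀ M (i (a, α)) m₀ ∧ Bag (Der i · N · ·) Δ a v ∧
      Γ = Γ₀ + Δ ∧ m = m₀ + v + 1 := by
  cases h with
  | app l hM hN => exact ⟨_, _, _, _, _, hM, Bag.of_list l hN, rfl, rfl⟩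

theorem Der.of_lam (hi : Function.Injective i) {n : ℕ} {Γ : Fin n → Multiset D}
    {M : Tm (n + 1)} {a : Multiset D} {α : D} {w : ℕ} (h : Der i Γ (.lam M) (i (a, α)) w) :
    Der i (Fin.cons a Γ) M α w := by
  generalize hβ : i (a, α) = β at h
  cases h with
  | lam h =>
    obtain ⟨rfl, rfl⟩ := Prod.ext_iff.mp (hi hβ)
    exact h

theorem Der.rename {n : ℕ} {Γ : Fin n → Multiset D} {M : Tm n} {α : D} {w : ℕ}
    (h : Der i Γ M α w) : ∀ {m : ℕ} (f : Fin n → Fin m), Der i (fiberSum f Γ) (M.rename f) α w := by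
  induction h with
  | var k α =>
    intro m f
    rw [single_eq_pi_single, fiberSum_single, ← single_eq_pi_single]
    exact Der.var _ _
  | lam _ ih =>
    intro m f
    have := ih fun k => Fin.cases (motive := fun _ => Fin (m + 1)) 0 (fun j => (f j).succ) k
    rw [fiberSum_cons] at this
    exact Der.lam this
  | @app _ _ _ N _ _ l _ _ ihM ihN =>
    intro m f
    rw [map_add]
    exact Der.app_of_bag (ihM f) ((Bag.of_list (R := fun c t w => ∀ {m} (f : Fin _ → Fin m),
      Der i (fiberSum f c) (N.rename f) t w) l ihN).map (fiberSum f) fun _ _ _ h => h f)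

theorem Der.bag_var {n : ℕ} (k : Fin n) (a : Multiset D) :
    Bag (Der i · (.var k) · ·) (Pi.single k a) a 0 := by
  induction a using Multiset.induction_on with
  | empty => simpa using Bag.zero
  | cons α a ih =>
    simpa [single_eq_pi_single, ← Pi.single_add] using
      Bag.cons (R := (Der i · (.var k) · ·)) (Der.var k α) ih

def Substitutable (i : Multiset D × D → D) {k : ℕ} (Γ : Fin k → Multiset D) (M : Tm k) (α : D)
    (w : ℕ) : Prop :=
  ∀ {m : ℕ} (σ : Fin k → Tm m) (Θ : Fin k → Fin m → Multiset D) (v : Fin k → ℕ),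
    (∀ j, Bag (Der i · (σ j) · ·) (Θ j) (Γ j) (v j)) →
      Der i (∑ j, Θ j) (M.subst σ) α (w + ∑ j, v j)

theorem Bag.subst {k : ℕ} {Δ : Fin k → Multiset D} {N : Tm k} {a : Multiset D} {w : ℕ}
    (h : Bag (Substitutable i · N · ·) Δ a w) {m : ℕ} (σ : Fin k → Tm m)
    (Θ : Fin k → Fin m → Multiset D) (v : Fin k → ℕ)
    (hσ : ∀ j, Bag (Der i · (σ j) · ·) (Θ j) (Δ j) (v j)) :
    Bag (Der i · (N.subst σ) · ·) (∑ j, Θ j) a (w + ∑ j, v j) := by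
  induction h generalizing Θ v with
  | zero =>
    obtain ⟨rfl, rfl⟩ : Θ = 0 ∧ v = 0 :=
      ⟨funext fun j => (hσ j).eq_zero.1, funext fun j => (hσ j).eq_zero.2⟩
    simpa using Bag.zero
  | @cons c c' _ _ _ _ hR _ ih =>
    obtain ⟨Θ₁, Θ₂, v₁, v₂, h₁, h₂, hΘ, hv⟩ := Bag.exists_split_family (a := c) (b := c') hσ
    rw [hΘ, hv]
    convert Bag.cons (R := (Der i · (N.subst σ) · ·)) (hR σ Θ₁ v₁ h₁) (ih Θ₂ v₂ h₂) using 1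
    omega

theorem Der.substitutable {k : ℕ} {Γ : Fin k → Multiset D} {M : Tm k} {α : D} {w : ℕ}
    (h : Der i Γ M α w) : Substitutable i Γ M α w := by
  induction h with
  | var k α =>
    intro m σ Θ v hσ
    have hoff : ∀ j ≠ k, Θ j = 0 ∧ v j = 0 := fun j hj =>
      Bag.eq_zero (by simpa [single, hj] using hσ j)
    have hk : Der i (Θ k) (σ k) α (v k) :=
      Bag.of_singleton (R := (Der i · (σ k) · ·)) (by simpa [single] using hσ k)
    rw [Finset.sum_eq_single k (fun j _ hj => (hoff j hj).1) (by simp),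
      Finset.sum_eq_single k (fun j _ hj => (hoff j hj).2) (by simp), zero_add]
    exact hk
  | @lam _ Γ a _ _ _ _ ih =>
    intro m σ Θ v hσ
    have := ih (fun k => Fin.cases (.var 0) (fun j => (σ j).rename Fin.succ) k)
      (Fin.cons (Pi.single 0 a) fun j => fiberSum Fin.succ (Θ j)) (Fin.cons 0 v)
      (Fin.cases (Der.bag_var 0 a) fun j =>
        (hσ j).map (fiberSum Fin.succ) fun _ _ _ h => h.rename Fin.succ)
    have hctx : Pi.single 0 a + ∑ j, fiberSum Fin.succ (Θ j) = Fin.cons a (∑ j, Θ j) := by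
      rw [← map_sum, fiberSum_succ]
      funext j
      cases j using Fin.cases <;> simp
    rw [Fin.sum_univ_succ, Fin.sum_univ_succ] at this
    simp only [Fin.cons_zero, Fin.cons_succ, hctx, zero_add] at this
    exact Der.lam this
  | @app _ Γ _ _ _ _ l _ _ ihM ihN =>
    intro m σ Θ v hσ
    obtain ⟨Θ₁, Θ₂, v₁, v₂, h₁, h₂, hΘ, hv⟩ :=
      Bag.exists_split_family (a := Γ) (b := (l.map fun q => q.1).sum) hσ
    rw [hΘ, hv, Tm.subst]
    convert Der.app_of_bag (ihM σ Θ₁ v₁ h₁) ((Bag.of_list l ihN).subst σ Θ₂ v₂ h₂) using 1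
    omega

end Der

theorem stmt_10_general {D : Type} (i : Multiset D × D → D)
    (hi : Function.Injective i) {n : ℕ} {Γ : Fin n → Multiset D}
    {M : Tm (n + 1)} {N : Tm n} {α : D} {m : ℕ}
    (h : Der i Γ (.app (.lam M) N) α m) :
    ∃ m' : ℕ, m = m' + 1 ∧ Der i Γ (M.subst1 N) α m' := by
  obtain ⟨Γ₀, Δ, a, m₀, v, hM, hN, rfl, rfl⟩ := h.exists_of_app
  refine ⟨m₀ + v, rfl, ?_⟩
  have hred := (hM.of_lam hi).substitutable (Fin.cases N Tm.var)
    (Fin.cons Δ fun j => Pi.single j (Γ₀ j)) (Fin.cons v 0)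
    (Fin.cases hN fun j => Der.bag_var j (Γ₀ j))
  simpa [Fin.sum_univ_succ, Finset.univ_sum_single, add_comm Γ₀, Tm.subst1] using hred

/-- Weighted subject reduction for a β-redex: contracting the redex yields a derivation
of the same judgment with exactly one application rule fewer. -/
theorem stmt_10 {D : Type} [Infinite D] (i : Multiset D × D → D)
    (hi : Function.Injective i) {n : ℕ} {Γ : Fin n → Multiset D}
    {M : Tm (n + 1)} {N : Tm n} {α : D} {m : ℕ}
    (h : Der i Γ (.app (.lam M) N) α m) :
    ∃ m' : ℕ, m = m' + 1 ∧ Der i Γ (M.subst1 N) α m' :=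
  stmt_10_general i hi h
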